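/- arXiv:1906.06611 — 2 statements merged into one kernel-verified Lean document; each statement's English description precedes it below -/
import Mathlib

section
/- Let G=(V,E) and H=(W,F) be finite simple graphs with locally injective functions g:V→ℝ and h:W→ℝ such that min(h) > max(g). In the join G+H with the combined function (g,h), the sub-level unit sphere of a vertex v∈V in G+H equals S_g(v) (computed in G), and the sub-level unit sphere of a vertex w∈W equals the join G + S_h(w). -/
open Finset
open scoped Classical

/-- The part of the unit sphere of `x` where `g` is smaller than `g x`. -/
def sphereSet {V : Type*} (G : SimpleGraph V) (g : V → ℝ) (x : V) : Set V :=
  {y | G.Adj x y ∧ g y < g x}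

/-- The sub-level unit sphere `S_g(x)` as an induced subgraph. -/
def sphereBelow {V : Type*} (G : SimpleGraph V) (g : V → ℝ) (x : V) :
    SimpleGraph (sphereSet G g x) :=
  G.induce (sphereSet G g x)

/-- The join `G + H` of two graphs on disjoint vertex sets. -/
def joinG {V W : Type*} (G : SimpleGraph V) (H : SimpleGraph W) : SimpleGraph (V ⊕ W) where
  Adj a b := match a, b with
    | .inl a, .inl b => G.Adj a b
    | .inr a, .inr b => H.Adj a b
    | _, _ => True
  symm := by constructor; rintro (a | a) (b | b) h <;> first | exact h.symm | trivial
  loopless := by constructor; rintro (a | a) h <;> exact SimpleGraph.irrefl _ h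

/-- Join sphere lemma: in `G + H` with combined function `(g,h)`, `min h > max g`,
the sub-level sphere of `v ∈ V` is (isomorphic to) `S_g(v)` computed in `G`, and the
sub-level sphere of `w ∈ W` is (isomorphic to) the join `G + S_h(w)`. -/
theorem join_sublevel_spheres {V W : Type*} [Fintype V] [Fintype W]
    (G : SimpleGraph V) (H : SimpleGraph W) (g : V → ℝ) (h : W → ℝ)
    (hgl : ∀ ⦃a b : V⦄, G.Adj a b → g a ≠ g b)
    (hhl : ∀ ⦃a b : W⦄, H.Adj a b → h a ≠ h b)
    (hlt : ∀ (v : V) (w : W), g v < h w) :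
    (∀ v : V,
      Nonempty ((sphereBelow (joinG G H) (Sum.elim g h) (Sum.inl v)) ≃g (sphereBelow G g v)))
    ∧ (∀ w : W,
      Nonempty ((sphereBelow (joinG G H) (Sum.elim g h) (Sum.inr w))
        ≃g (joinG G (sphereBelow H h w)))) := by
  constructor
  · intro v
    refine ⟨⟨⟨fun y => match y with
        | ⟨Sum.inl a, ha⟩ => ⟨a, ha⟩
        | ⟨Sum.inr b, hb⟩ => absurd hb.2 (not_lt.2 (hlt v b).le),
      fun a => ⟨Sum.inl a.1, a.2⟩, ?_, ?_⟩, ?_⟩⟩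
    · rintro ⟨(a | b), hy⟩
      · rfl
      · exact absurd hy.2 (not_lt.2 (hlt v b).le)
    · rintro ⟨a, ha⟩; rfl
    · rintro ⟨(a | b), hy⟩ ⟨(a' | b'), hy'⟩ <;>
        first
        | exact Iff.rfl
        | exact absurd hy.2 (not_lt.2 (hlt v _).le)
        | exact absurd hy'.2 (not_lt.2 (hlt v _).le)
  · intro w
    refine ⟨⟨⟨fun y => match y with
        | ⟨Sum.inl a, _⟩ => Sum.inl a
        | ⟨Sum.inr b, hb⟩ => Sum.inr ⟨b, hb⟩,
      fun z => match z with
        | Sum.inl a => ⟨Sum.inl a, ⟨trivial, hlt a w⟩⟩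
        | Sum.inr b => ⟨Sum.inr b.1, b.2⟩, ?_, ?_⟩, ?_⟩⟩
    · rintro ⟨(a | b), hy⟩ <;> rfl
    · rintro (a | ⟨b, hb⟩) <;> rfl
    · rintro ⟨(a | b), hy⟩ ⟨(a' | b'), hy'⟩ <;> exact Iff.rfl
end

section
/- For any finite simple graph G and locally injective function g, every clique of G on k+1 vertices (k ≥ 0) arises from a unique pair (x, c) where x is a vertex and c is a clique of S_g(x) on k vertices (with the empty clique allowed), via c ↦ c ∪ {x}; here x is the g-maximal vertex of the clique. -/
open Finset
open scoped Classical

/-- The sub-level sphere of `x`: neighbors `y` of `x` with `g y < g x`. -/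
def sphSet {V : Type*} (G : SimpleGraph V) (g : V → ℝ) (x : V) : Set V :=
  {y | G.Adj x y ∧ g y < g x}

namespace SimpleGraph

variable {V β : Type*} {G : SimpleGraph V}

theorem IsClique.exists_strict_max [LinearOrder β] {g : V → β}
    (hg : ∀ ⦃a b : V⦄, G.Adj a b → g a ≠ g b) {K : Finset V} (hK : G.IsClique (K : Set V))
    (hne : K.Nonempty) : ∃ x ∈ K, ∀ u ∈ K, u ≠ x → g u < g x := by
  obtain ⟨x, hxK, hmax⟩ := K.exists_max_image g hne
  refine ⟨x, hxK, fun u hu hux => (hmax u hu).lt_of_ne fun h => hg ?_ h.symm⟩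
  exact hK hxK hu (Ne.symm hux)

theorem IsClique.coe_erase_subset_sphSet {g : V → ℝ} {K : Finset V}
    (hK : G.IsClique (K : Set V)) {x : V} (hxK : x ∈ K) (hx : ∀ u ∈ K, u ≠ x → g u < g x) :
    (↑(K.erase x) : Set V) ⊆ sphSet G g x := by
  intro y hy
  obtain ⟨hyx, hyK⟩ := mem_erase.1 hy
  exact ⟨hK hxK hyK (Ne.symm hyx), hx y hyK hyx⟩

end SimpleGraph

theorem Finset.eq_of_forall_ne_lt {V β : Type*} [Preorder β] {g : V → β} {K : Finset V}
    {x x' : V} (hxK : x ∈ K) (hx'K : x' ∈ K) (hx : ∀ u ∈ K, u ≠ x → g u < g x)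
    (hx' : ∀ u ∈ K, u ≠ x' → g u < g x') : x' = x := by
  by_contra h
  exact lt_asymm (hx x' hx'K h) (hx' x hxK (Ne.symm h))

theorem clique_unique_decomposition_general {V : Type*} (G : SimpleGraph V) (g : V → ℝ)
    (hg : ∀ ⦃a b : V⦄, G.Adj a b → g a ≠ g b)
    (K : Finset V) (hK : G.IsClique (K : Set V)) (hne : K.Nonempty) :
    ∃! p : V × Finset V,
      p.1 ∈ K ∧ p.1 ∉ p.2 ∧ K = insert p.1 p.2 ∧
      (↑p.2 : Set V) ⊆ sphSet G g p.1 ∧ G.IsClique (p.2 : Set V) ∧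
      (∀ u ∈ K, u ≠ p.1 → g u < g p.1) := by
  obtain ⟨x, hxK, hx⟩ := hK.exists_strict_max hg hne
  refine ⟨(x, K.erase x), ⟨hxK, K.notMem_erase x, (K.insert_erase hxK).symm,
    hK.coe_erase_subset_sphSet hxK hx, hK.subset (by simp), hx⟩, ?_⟩
  rintro ⟨x', c⟩ ⟨hx'K, hx'c, rfl, -, -, hx'⟩
  obtain rfl : x' = x := Finset.eq_of_forall_ne_lt hxK hx'K hx hx'
  simp [erase_insert hx'c]

/-- Each nonempty clique `K` of `G` decomposes uniquely as `K = {x} ∪ c` with `x` the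
`g`-maximal vertex of `K` and `c` a (possibly empty) clique contained in `S_g(x)`:
the bijection `c ↦ c ∪ {x}` underlying the parametrized Poincaré–Hopf formula. -/
theorem clique_unique_decomposition {V : Type*} [Fintype V] (G : SimpleGraph V) (g : V → ℝ)
    (hg : ∀ ⦃a b : V⦄, G.Adj a b → g a ≠ g b)
    (K : Finset V) (hK : G.IsClique (K : Set V)) (hne : K.Nonempty) :
    ∃! p : V × Finset V,
      p.1 ∈ K ∧ p.1 ∉ p.2 ∧ K = insert p.1 p.2 ∧
      (↑p.2 : Set V) ⊆ sphSet G g p.1 ∧ G.IsClique (p.2 : Set V) ∧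
      (∀ u ∈ K, u ≠ p.1 → g u < g p.1) :=
  clique_unique_decomposition_general G g hg K hK hne
end
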